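/- Let G be a finite nonabelian 2-group that is minimally faithful of degree 3. Then the center Z(G) is not cyclic. -/

import Mathlib

/-! If `Z(G)` is cyclic, a faithful representation `ρ` of `G` on `V = ℂ³` has a faithful
subrepresentation of smaller dimension, contradicting `rdim G = 3`.

Since `3` is prime to `|G|`, the determinant shows that a commutator acting by a scalar acts
trivially. So if every central element acted by a scalar, the second centre of `G` would equal
its centre, which is impossible in a nonabelian nilpotent group. Hence some central `z` acts
non-scalarly; `ρ z` is semisimple, and for an eigenvalue `μ` the Fitting decomposition
`V = ker (ρ z - μ)ⁿ ⊕ range (ρ z - μ)ⁿ` has two proper `G`-stable summands. When `Z(G)` is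
cyclic, its unique involution lies in every nontrivial normal subgroup, so the kernels of `G` on
the two summands cannot both be nontrivial, and one summand is faithful. -/

/-- `rdim G` is the smallest `n` such that `G` has a faithful `n`-dimensional
complex representation, i.e. an injective group homomorphism `G →* GL n ℂ`. -/
noncomputable def rdim (G : Type*) [Group G] : ℕ :=
  sInf {n : ℕ | ∃ ρ : G →* GL (Fin n) ℂ, Function.Injective ρ}

/-- `G` is minimally faithful of degree `n` if `rdim G = n` and every proper
subgroup has strictly smaller representation dimension. -/
def MinFaithful (G : Type*) [Group G] (n : ℕ) : Prop :=
  rdim G = n ∧ ∀ H : Subgroup G, H ≠ ⊤ → rdim H < n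

open Module
open Subgroup (center mem_center_iff)
open scoped commutatorElement

theorem IsPGroup.dvd_card_of_ne_bot {p : ℕ} [Fact p.Prime] {G : Type*} [Group G]
    (hp : IsPGroup p G) {H : Subgroup G} (hH : H ≠ ⊥) : p ∣ Nat.card H :=
  (hp.to_subgroup H).card_eq_or_dvd.resolve_left (Subgroup.card_eq_one.not.mpr hH)

theorem IsPGroup.inf_center_ne_bot {p : ℕ} [Fact p.Prime] {G : Type*} [Group G] [Finite G]
    (hp : IsPGroup p G) {N : Subgroup G} [N.Normal] (hN : N ≠ ⊥) : N ⊓ center G ≠ ⊥ := by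
  have hfix : (1 : N) ∈ MulAction.fixedPoints (ConjAct G) N := fun g ↦ by ext; simp
  have hpc : IsPGroup p (ConjAct G) := hp.of_equiv ConjAct.toConjAct
  obtain ⟨t, htfix, ht1⟩ :=
    hpc.exists_fixed_point_of_prime_dvd_card_of_fixed_point N (hp.dvd_card_of_ne_bot hN) hfix
  refine Subgroup.ne_bot_iff_exists_ne_one.mpr
    ⟨⟨t, t.2, mem_center_iff.mpr fun g ↦ ?_⟩, ?_⟩
  · have := congrArg Subtype.val (htfix (ConjAct.toConjAct g))
    rw [ConjAct.Subgroup.val_conj_smul, ConjAct.smul_def, ConjAct.ofConjAct_toConjAct] at this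
    exact mul_inv_eq_iff_eq_mul.mp this
  · exact fun h ↦ ht1 (Subtype.ext (congrArg Subtype.val h).symm)

theorem IsCyclic.eq_of_orderOf_eq_two {Z : Type*} [Group Z] [Finite Z] [IsCyclic Z] {x y : Z}
    (hx : orderOf x = 2) (hy : orderOf y = 2) : x = y := by
  classical
  have := Fintype.ofFinite Z
  have hcard := IsCyclic.card_orderOf_eq_totient (α := Z) (hx ▸ orderOf_dvd_card)
  rw [Nat.totient_two] at hcard
  exact Finset.card_le_one.mp hcard.le x (by simp [hx]) y (by simp [hy])

theorem IsPGroup.exists_forall_normal_ne_bot_mem {G : Type*} [Group G] [Finite G] [Nontrivial G]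
    (hp : IsPGroup 2 G) (hZ : IsCyclic (center G)) :
    ∃ s : G, s ≠ 1 ∧ ∀ N : Subgroup G, N.Normal → N ≠ ⊥ → s ∈ N := by
  have : Fact (Nat.Prime 2) := ⟨Nat.prime_two⟩
  obtain ⟨s, hs⟩ :=
    exists_prime_orderOf_dvd_card' 2 (hp.dvd_card_of_ne_bot hp.bot_lt_center.ne')
  refine ⟨s, fun h ↦ ?_, fun N hN hN0 ↦ ?_⟩
  · rw [show s = 1 from Subtype.ext h, orderOf_one] at hs
    omega
  obtain ⟨t, ht⟩ :=
    exists_prime_orderOf_dvd_card' 2 (hp.dvd_card_of_ne_bot (hp.inf_center_ne_bot hN0))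
  have ht' : orderOf (⟨t, t.2.2⟩ : center G) = 2 := by
    rw [← Subgroup.orderOf_coe, ← ht, ← Subgroup.orderOf_coe t]
  have hts : (⟨t, t.2.2⟩ : center G) = s := IsCyclic.eq_of_orderOf_eq_two ht' hs
  exact congrArg Subtype.val hts ▸ t.2.1

section

variable {K G V : Type*} [Field K] [Group G] [AddCommGroup V] [Module K V]

theorem eq_one_of_det_smul_one_eq_one_of_pow_eq_one [FiniteDimensional K V] [Nontrivial V]
    {a : K} {m : ℕ} (hdet : LinearMap.det (a • 1 : Module.End K V) = 1)
    (hpow : (a • 1 : Module.End K V) ^ m = 1) (hcop : m.Coprime (finrank K V)) : a = 1 := by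
  rw [LinearMap.det_smul, map_one, mul_one] at hdet
  rw [smul_pow, one_pow] at hpow
  have ham : a ^ m = 1 := smul_left_injective K one_ne_zero (hpow.trans (one_smul K 1).symm)
  simpa [hcop] using pow_gcd_eq_one.mpr ⟨ham, hdet⟩

theorem Module.End.isSemisimple_of_pow_eq_one {f : Module.End K V} {m : ℕ} (hm : (m : K) ≠ 0)
    (hf : f ^ m = 1) : f.IsSemisimple :=
  isSemisimple_of_squarefree_aeval_eq_zero
    (Polynomial.X_pow_sub_one_separable_iff.mpr hm).squarefree (by simp [hf])

namespace Representation

theorem det_commutatorElement (ρ : Representation K G V) (g h : G) :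
    LinearMap.det (ρ ⁅g, h⁆) = 1 := by
  let δ : G →* Kˣ := (Units.map LinearMap.det).comp ρ.asGroupHom
  have hδ : δ ⁅g, h⁆ = 1 :=
    (map_commutatorElement δ g h).trans
      (commutatorElement_eq_one_iff_commute.mpr (Commute.all _ _))
  exact congrArg Units.val hδ

theorem exists_mem_center_forall_ne_smul_one [FiniteDimensional K V] [Nontrivial V]
    [Finite G] [Group.IsNilpotent G] (hG : center G ≠ ⊤) {ρ : Representation K G V}
    (hρ : Function.Injective ρ) (hcop : (Nat.card G).Coprime (finrank K V)) :
    ∃ z ∈ center G, ∀ a : K, ρ z ≠ a • 1 := by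
  by_contra! hscalar
  obtain ⟨g, hg2, hg1⟩ : ∃ g ∈ Subgroup.upperCentralSeries G 2, g ∉ center G := by
    by_contra! hle
    rw [← Subgroup.upperCentralSeries_one] at hG hle
    exact hG (Subgroup.upperCentralSeries.eq_top (by norm_num)
      (le_antisymm (Subgroup.upperCentralSeries_mono G one_le_two) hle))
  refine hg1 (mem_center_iff.mpr fun h ↦ ?_)
  have hgh : ⁅g, h⁆ ∈ center G :=
    Subgroup.upperCentralSeries_one G ▸ Subgroup.mem_upperCentralSeries_succ_iff.mp hg2 h
  obtain ⟨a, ha⟩ := hscalar _ hgh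
  have ha1 : a = 1 := eq_one_of_det_smul_one_eq_one_of_pow_eq_one
    (ha ▸ ρ.det_commutatorElement g h)
    (by rw [← ha, ← map_pow, pow_card_eq_one', map_one]) hcop
  rw [ha1, one_smul, ← map_one ρ] at ha
  exact (commutatorElement_eq_one_iff_mul_comm.mp (hρ ha)).symm

theorem exists_sup_eq_top_of_mem_center [IsAlgClosed K] [FiniteDimensional K V]
    (ρ : Representation K G V) {z : G} (hz : z ∈ center G) (hss : Module.End.IsSemisimple (ρ z))
    (hns : ∀ a : K, ρ z ≠ a • 1) :
    ∃ σ τ : Subrepresentation ρ, σ ⊔ τ = ⊤ ∧ σ ≠ ⊤ ∧ τ ≠ ⊤ := by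
  have : Nontrivial V := by
    by_contra!
    exact hns 0 (Subsingleton.elim _ _)
  obtain ⟨μ, hμ⟩ := Module.End.exists_eigenvalue (ρ z)
  obtain ⟨n, hcompl, hn⟩ :=
    ((LinearMap.eventually_isCompl_ker_pow_range_pow (ρ z - μ • 1)).and
      (Filter.eventually_ge_atTop 1)).exists
  set B := (ρ z - μ • 1) ^ n
  have hcomm (g : G) : Commute (ρ g) B := by
    refine Commute.pow_right (Commute.sub_right ?_ (Commute.smul_right (Commute.one_right _) μ)) n
    rw [Commute, SemiconjBy, ← map_mul, ← map_mul, mem_center_iff.mp hz]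
  let σ : Subrepresentation ρ := ⟨LinearMap.ker B, fun g v hv ↦ by
    rw [LinearMap.mem_ker] at hv ⊢
    rw [← Module.End.mul_apply, ← (hcomm g).eq, Module.End.mul_apply, hv, map_zero]⟩
  let τ : Subrepresentation ρ := ⟨LinearMap.range B, fun g v ⟨w, hw⟩ ↦
    ⟨ρ g w, by
      rw [← hw, ← Module.End.mul_apply, ← (hcomm g).eq, Module.End.mul_apply]⟩⟩
  refine ⟨σ, τ, Subrepresentation.toSubmodule_injective hcompl.codisjoint.eq_top,
    fun hσ ↦ ?_, fun hτ ↦ ?_⟩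
  · have hB : B = 0 := LinearMap.ker_eq_top.mp (congrArg Subrepresentation.toSubmodule hσ)
    exact hns μ (sub_eq_zero.mp (Module.End.eq_zero_of_isNilpotent_isSemisimple ⟨n, hB⟩
      (Module.End.isSemisimple_sub_algebraMap_iff.mpr hss)))
  · have hrange : LinearMap.range B = ⊤ := congrArg Subrepresentation.toSubmodule hτ
    have hker : LinearMap.ker B = ⊥ := hcompl.disjoint.eq_bot_of_le (hrange ▸ le_top)
    have := Module.End.eigenspace_le_genEigenspace (f := ρ z) (μ := μ) hn
    rw [Module.End.genEigenspace_nat] at this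
    exact hμ (le_bot_iff.mp (hker ▸ this))

theorem injective_toRepresentation_or {ρ : Representation K G V}
    (hρ : Function.Injective ρ) {σ τ : Subrepresentation ρ} (hστ : σ ⊔ τ = ⊤) {s : G}
    (hs1 : s ≠ 1) (hs : ∀ N : Subgroup G, N.Normal → N ≠ ⊥ → s ∈ N) :
    Function.Injective σ.toRepresentation ∨ Function.Injective τ.toRepresentation := by
  simp only [← MonoidHom.ker_eq_bot_iff]
  by_contra! hker
  have hσ := MonoidHom.mem_ker.mp (hs _ inferInstance hker.1)
  have hτ := MonoidHom.mem_ker.mp (hs _ inferInstance hker.2)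
  refine hs1 (hρ (LinearMap.ext fun v ↦ ?_))
  have hv : v ∈ σ.toSubmodule ⊔ τ.toSubmodule :=
    (congrArg Subrepresentation.toSubmodule hστ).ge Submodule.mem_top
  obtain ⟨x, hx, y, hy, rfl⟩ := Submodule.mem_sup.mp hv
  have hx' : ρ s x = x := congrArg Subtype.val (LinearMap.congr_fun hσ ⟨x, hx⟩)
  have hy' : ρ s y = y := congrArg Subtype.val (LinearMap.congr_fun hτ ⟨y, hy⟩)
  rw [map_add, hx', hy', map_one, Module.End.one_apply]

end Representation

end

theorem rdim_le_finrank {G W : Type*} [Group G] [AddCommGroup W] [Module ℂ W]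
    [FiniteDimensional ℂ W] {ρ : Representation ℂ G W} (hρ : Function.Injective ρ) :
    rdim G ≤ finrank ℂ W := by
  let e := LinearMap.toMatrixAlgEquiv (Module.finBasis ℂ W)
  exact Nat.sInf_le ⟨(e.toMonoidHom.comp ρ).toHomUnits,
    fun g h hgh ↦ hρ (e.injective (congrArg Units.val hgh))⟩

theorem Subrepresentation.rdim_lt_finrank {G V : Type*} [Group G] [AddCommGroup V]
    [Module ℂ V] [FiniteDimensional ℂ V] {ρ : Representation ℂ G V}
    {σ : Subrepresentation ρ} (hσ : σ ≠ ⊤) (hinj : Function.Injective σ.toRepresentation) :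
    rdim G < finrank ℂ V :=
  (rdim_le_finrank hinj).trans_lt (Submodule.finrank_lt fun h ↦ hσ (toSubmodule_injective h))

theorem exists_injective_representation_of_rdim_eq {G : Type*} [Group G] {n : ℕ}
    (h : rdim G = n) (hn : n ≠ 0) :
    ∃ ρ : Representation ℂ G (Fin n → ℂ), Function.Injective ρ := by
  obtain ⟨ρ, hρ⟩ : ∃ ρ : G →* GL (Fin n) ℂ, Function.Injective ρ :=
    h ▸ Nat.sInf_mem (Nat.nonempty_of_pos_sInf (Nat.pos_of_ne_zero (h ▸ hn)))
  let e := Matrix.toLinAlgEquiv' (R := ℂ) (n := Fin n)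
  exact ⟨e.toMonoidHom.comp ((Units.coeHom _).comp ρ),
    fun g h hgh ↦ hρ (Units.ext (e.injective hgh))⟩

theorem stmt_15 (G : Type*) [Group G] [Finite G] (hp : IsPGroup 2 G)
    (hna : ¬ ∀ a b : G, a * b = b * a) (h : MinFaithful G 3) :
    ¬ IsCyclic (Subgroup.center G) := by
  intro hcyc
  have : Fact (Nat.Prime 2) := ⟨Nat.prime_two⟩
  have : Group.IsNilpotent G := hp.isNilpotent
  have hcenter : center G ≠ ⊤ := fun htop ↦
    hna fun a b ↦ mem_center_iff.mp (htop ▸ Subgroup.mem_top b) a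
  have : Nontrivial G := by
    by_contra!
    exact hcenter (Subsingleton.elim _ _)
  obtain ⟨ρ, hρ⟩ := exists_injective_representation_of_rdim_eq h.1 three_ne_zero
  have hcop : (Nat.card G).Coprime (finrank ℂ (Fin 3 → ℂ)) := by
    obtain ⟨k, hk⟩ := IsPGroup.iff_card.mp hp
    rw [hk, finrank_fin_fun]
    exact Nat.Coprime.pow_left k (by norm_num)
  obtain ⟨z, hz, hns⟩ := ρ.exists_mem_center_forall_ne_smul_one hcenter hρ hcop
  have hss : Module.End.IsSemisimple (ρ z) := Module.End.isSemisimple_of_pow_eq_one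
    (Nat.cast_ne_zero.mpr Nat.card_pos.ne') (by rw [← map_pow, pow_card_eq_one', map_one])
  obtain ⟨σ, τ, hστ, hσ, hτ⟩ := ρ.exists_sup_eq_top_of_mem_center hz hss hns
  obtain ⟨s, hs1, hs⟩ := hp.exists_forall_normal_ne_bot_mem hcyc
  have hlt : rdim G < finrank ℂ (Fin 3 → ℂ) := by
    rcases ρ.injective_toRepresentation_or hρ hστ hs1 hs with hinj | hinj
    · exact σ.rdim_lt_finrank hσ hinj
    · exact τ.rdim_lt_finrank hτ hinj
  rw [finrank_fin_fun, h.1] at hlt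
  exact lt_irrefl 3 hlt
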